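/- arXiv:2602.20949 — 3 statements merged into one kernel-verified Lean document; each statement's English description precedes it below -/
import Mathlib

section
/- Viewing S_σ as a cyclic string, for every b ∈ {0,…,σ−1}, the 2-gram (σ−1)b occurs exactly twice in S_σ (cyclically), and the set of characters c such that (σ−1)bc occurs as a cyclic 3-gram of S_σ is exactly {σ−1, 0}. -/
open List

/-- Block for symbol `a`: pairs (a,0)(a,1)⋯(a,σ-1) followed by a repeat of (a,σ-1). -/
def block (σ a : ℕ) : List ℕ :=
  ((List.range σ).flatMap fun b => [a, b]) ++ [a, σ - 1]

/-- The string S_σ: blocks for a = 0,…,σ-2 followed by the pair (σ-1,σ-1). -/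
def Sstr (σ : ℕ) : List ℕ :=
  ((List.range (σ - 1)).flatMap fun a => block σ a) ++ [σ - 1, σ - 1]

/-- Rotation of `S` by offset `i`. -/
def rot (S : List ℕ) (i : ℕ) : List ℕ := S.drop i ++ S.take i

/-- Cyclic k-gram of `S` starting at position `i` (indices mod `S.length`). -/
def cyc (S : List ℕ) (i k : ℕ) : List ℕ :=
  (List.range k).map fun j => S.getD ((i + j) % S.length) 0

/-- Number of cyclic occurrences of `u` in `S`. -/
def cOcc (S u : List ℕ) : ℕ :=
  ((List.range S.length).filter fun i => cyc S i u.length = u).length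

/-- `u` occurs as a cyclic substring of `S`. -/
def cOccurs (S u : List ℕ) : Prop := 0 < cOcc S u

/-- Number of runs (maximal blocks of equal symbols) of a list. -/
def runsCount (l : List ℕ) : ℕ := (l.destutter (· ≠ ·)).length

/-- Cyclic Burrows–Wheeler transform: sort all rotations lexicographically,
read the last column. -/
def cBWT (S : List ℕ) : List ℕ :=
  (((List.range S.length).map fun i => rot S i).insertionSort (· ≤ ·)).map
    fun ρ => ρ.getD (S.length - 1) 0

/-- Terminated string `t$`: symbols shifted by +1 and sentinel `0 = $` appended,
so the sentinel is strictly smaller than all alphabet symbols. -/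
def term (t : List ℕ) : List ℕ := (t.map (· + 1)) ++ [0]

/-- BWT of the terminated string `t$`: last column of the sorted rotation matrix. -/
def bwt (t : List ℕ) : List ℕ :=
  (((List.range (term t).length).map fun i => rot (term t) i).insertionSort (· ≤ ·)).map
    fun ρ => ρ.getD ((term t).length - 1) 0

/-- `x` is right-maximal in `w`: two distinct right extensions of `x` occur in `w`. -/
def RightMaximal (w x : List ℕ) : Prop :=
  ∃ a b : ℕ, a ≠ b ∧ (x ++ [a]) <:+: w ∧ (x ++ [b]) <:+: w

/-- The set of right-extensions of `w`. -/
def ExtSet (w : List ℕ) : Set (List ℕ) :=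
  {y | ∃ x a, RightMaximal w x ∧ y = x ++ [a] ∧ y <:+: w}

/-- Super-maximal right-extensions: right-extensions that are not a proper suffix
of another right-extension. -/
def SuperMax (w : List ℕ) : Set (List ℕ) :=
  {y ∈ ExtSet w | ∀ z ∈ ExtSet w, y <:+ z → y = z}

/-- χ: size of a smallest suffixient set = number of super-maximal right-extensions. -/
noncomputable def chi (w : List ℕ) : ℕ := (SuperMax w).ncard

/-- The regular cBWT block: each of 0,…,σ-1 twice in increasing order. -/
def patBlock (σ : ℕ) : List ℕ := (List.range σ).flatMap fun c => [c, c]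

/-- The final irregular cBWT block: each of 0,…,σ-3 twice, then σ-2, σ-1, σ-2. -/
def patFinal (σ : ℕ) : List ℕ :=
  ((List.range (σ - 2)).flatMap fun c => [c, c]) ++ [σ - 2, σ - 1, σ - 2]

/-- The canonical cBWT pattern: (σ-1) · (regular block)^m · final block. -/
def pattern (σ m : ℕ) : List ℕ :=
  [σ - 1] ++ (List.replicate m (patBlock σ)).flatten ++ patFinal σ

/-- `S` is 2-branching at order `k` over alphabet {0,…,σ-1}: every (k-1)-gram
occurs and its set of k-gram extensions is {u[0], (u[0]+1) mod σ}. -/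
def TwoBranching (σ k : ℕ) (S : List ℕ) : Prop :=
  ∀ u : List ℕ, u.length = k - 1 → (∀ x ∈ u, x < σ) →
    cOccurs S u ∧ ∀ c, c < σ →
      (cOccurs S (u ++ [c]) ↔ c = u.headD 0 ∨ c = (u.headD 0 + 1) % σ)

/-!
Cut `S_σ` into the blocks `q0 q1 ⋯ q(σ-1) q(σ-1)` of length `2σ + 2` (`q < σ - 1`) and the
tail `(σ-1)(σ-1)`. Even positions of block `q` carry `q < σ - 1`, so the letter `σ - 1` occurs
only at the last two odd positions of each block and in the tail. Reading the two letters after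
each of these positions shows that every `b < σ` follows `σ - 1` exactly twice: once continued
by `σ - 1` (inside block `b`, or entering the tail when `b = σ - 1`) and once continued by `0`
(entering block `b`, or wrapping around from the tail when `b = 0` or `b = σ - 1`).
-/

theorem mul_add_self_of_succ_eq {p q : ℕ} (h : p + 1 = q) (L : ℕ) : p * L + L = q * L := by
  subst h; ring

theorem length_flatMap_range_of_length_eq {α : Type*} {f : ℕ → List α} {L : ℕ}
    (hf : ∀ a, (f a).length = L) (n : ℕ) : ((range n).flatMap f).length = n * L := by
  simp [length_flatMap, hf]

theorem getD_flatMap_range_mul_add {α : Type*} {f : ℕ → List α} {L : ℕ}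
    (hf : ∀ a, (f a).length = L) {n q r : ℕ} (hq : q < n) (hr : r < L) (d : α) :
    ((range n).flatMap f).getD (q * L + r) d = (f q).getD r d := by
  induction n with
  | zero => omega
  | succ n ih =>
    have hlen := length_flatMap_range_of_length_eq hf n
    rw [range_succ, flatMap_append]
    rcases Nat.lt_succ_iff_lt_or_eq.1 hq with hq | rfl
    · rw [getD_append _ _ _ _ (by rw [hlen]; nlinarith), ih hq]
    · rw [getD_append_right _ _ _ _ (by rw [hlen]; omega), hlen, Nat.add_sub_cancel_left]
      simp

theorem cyc_take (S : List ℕ) (i : ℕ) {m k : ℕ} (h : m ≤ k) :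
    (cyc S i k).take m = cyc S i m := by
  simp [cyc, ← map_take, take_range, Nat.min_eq_left h]

theorem cyc_two_of_cyc_three {S : List ℕ} {i x y z : ℕ} (h : cyc S i 3 = [x, y, z]) :
    cyc S i 2 = [x, y] := by
  rw [← cyc_take S i (show 2 ≤ 3 by norm_num), h]
  rfl

theorem cyc_two (S : List ℕ) (i : ℕ) :
    cyc S i 2 = [S.getD (i % S.length) 0, S.getD ((i + 1) % S.length) 0] := by
  simp [cyc, range_succ]

theorem cyc_three (S : List ℕ) (i : ℕ) :
    cyc S i 3 = [S.getD (i % S.length) 0, S.getD ((i + 1) % S.length) 0,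
      S.getD ((i + 2) % S.length) 0] := by
  simp [cyc, range_succ]

theorem cyc_three_of_lt {S : List ℕ} {i : ℕ} (h : i + 2 < S.length) :
    cyc S i 3 = [S.getD i 0, S.getD (i + 1) 0, S.getD (i + 2) 0] := by
  rw [cyc_three, Nat.mod_eq_of_lt (by omega), Nat.mod_eq_of_lt (by omega), Nat.mod_eq_of_lt h]

theorem cOcc_eq_card (S u : List ℕ) :
    cOcc S u = ((Finset.range S.length).filter fun i => cyc S i u.length = u).card :=
  rfl

theorem cOccurs_iff (S u : List ℕ) : cOccurs S u ↔ ∃ i < S.length, cyc S i u.length = u := by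
  simp [cOccurs, cOcc, length_pos_iff_exists_mem]

theorem block_eq_flatMap (σ a : ℕ) :
    block σ a = (range (σ + 1)).flatMap fun j => [a, min j (σ - 1)] := by
  rw [block, range_succ, flatMap_append]
  congr 1
  · refine flatMap_congr fun j hj => ?_
    rw [mem_range] at hj
    rw [Nat.min_eq_left (by omega)]
  · simp

theorem length_block (σ a : ℕ) : (block σ a).length = 2 * σ + 2 := by
  simp [block, length_flatMap_range_of_length_eq (f := fun b => [a, b]) (L := 2) (fun _ => rfl)]
  ring

theorem length_Sstr (σ : ℕ) : (Sstr σ).length = (σ - 1) * (2 * σ + 2) + 2 := by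
  simp [Sstr, length_flatMap_range_of_length_eq (length_block σ)]

theorem add_block_le {σ q : ℕ} (hq : q < σ - 1) :
    q * (2 * σ + 2) + (2 * σ + 2) ≤ (σ - 1) * (2 * σ + 2) := by
  rw [← Nat.succ_mul]
  exact Nat.mul_le_mul_right _ hq

theorem getD_Sstr_of_lt {σ q r : ℕ} (hq : q < σ - 1) (hr : r < 2 * σ + 2) :
    (Sstr σ).getD (q * (2 * σ + 2) + r) 0 = (block σ q).getD r 0 := by
  have hlen := length_flatMap_range_of_length_eq (length_block σ) (σ - 1)
  rw [Sstr, getD_append _ _ _ _ (by rw [hlen]; nlinarith),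
    getD_flatMap_range_mul_add (length_block σ) hq hr]

theorem getD_Sstr_even {σ q j : ℕ} (hq : q < σ - 1) (hj : j ≤ σ) :
    (Sstr σ).getD (q * (2 * σ + 2) + 2 * j) 0 = q := by
  rw [getD_Sstr_of_lt hq (by omega), block_eq_flatMap, mul_comm 2 j, ← add_zero (j * 2),
    getD_flatMap_range_mul_add (L := 2) (fun _ => rfl) (by omega) (by omega)]
  rfl

theorem getD_Sstr_odd {σ q j : ℕ} (hq : q < σ - 1) (hj : j ≤ σ) :
    (Sstr σ).getD (q * (2 * σ + 2) + (2 * j + 1)) 0 = min j (σ - 1) := by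
  rw [getD_Sstr_of_lt hq (by omega), block_eq_flatMap, mul_comm 2 j,
    getD_flatMap_range_mul_add (L := 2) (fun _ => rfl) (by omega) (by omega)]
  rfl

theorem getD_Sstr_tail {σ r : ℕ} (hr : r < 2) :
    (Sstr σ).getD ((σ - 1) * (2 * σ + 2) + r) 0 = σ - 1 := by
  have hlen := length_flatMap_range_of_length_eq (length_block σ) (σ - 1)
  rw [Sstr, getD_append_right _ _ _ _ (by rw [hlen]; omega), hlen, Nat.add_sub_cancel_left]
  interval_cases r <;> rfl

theorem getD_Sstr_zero {σ : ℕ} (hσ : 2 ≤ σ) : (Sstr σ).getD 0 0 = 0 := by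
  simpa using getD_Sstr_even (q := 0) (j := 0) (show 0 < σ - 1 by omega) (by omega)

theorem getD_Sstr_one {σ : ℕ} (hσ : 2 ≤ σ) : (Sstr σ).getD 1 0 = 0 := by
  simpa using getD_Sstr_odd (q := 0) (j := 0) (show 0 < σ - 1 by omega) (by omega)

/- Positions are written in block coordinates `q * (2σ + 2) + r`; the tail starts at
`(σ - 1) * (2σ + 2)`. `occTop σ b` and `occZero σ b` are the positions of `(σ-1) b (σ-1)` and
of `(σ-1) b 0`. -/
def occTop (σ b : ℕ) : ℕ :=
  if b < σ - 1 then b * (2 * σ + 2) + (2 * (σ - 1) + 1)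
  else (σ - 2) * (2 * σ + 2) + (2 * σ + 1)

def occZero (σ b : ℕ) : ℕ :=
  if b = 0 then (σ - 1) * (2 * σ + 2) + 1
  else if b < σ - 1 then (b - 1) * (2 * σ + 2) + (2 * σ + 1) else (σ - 1) * (2 * σ + 2)

theorem occTop_lt_length {σ : ℕ} (hσ : 2 ≤ σ) (b : ℕ) :
    occTop σ b < (Sstr σ).length := by
  rw [length_Sstr, occTop]
  split_ifs with hbσ
  · have := add_block_le hbσ
    omega
  · have := add_block_le (show σ - 2 < σ - 1 by omega)
    omega

theorem occZero_lt_length (σ b : ℕ) : occZero σ b < (Sstr σ).length := by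
  rw [length_Sstr, occZero]
  split_ifs with hb0 hbσ
  · omega
  · have := add_block_le (show b - 1 < σ - 1 by omega)
    omega
  · omega

theorem cyc_Sstr_occTop {σ b : ℕ} (hσ : 2 ≤ σ) (hb : b < σ) :
    cyc (Sstr σ) (occTop σ b) 3 = [σ - 1, b, σ - 1] := by
  have hlen := length_Sstr σ
  unfold occTop
  split_ifs with hbσ
  · have := add_block_le hbσ
    rw [cyc_three_of_lt (by omega), getD_Sstr_odd hbσ (by omega),
      show b * (2 * σ + 2) + (2 * (σ - 1) + 1) + 1 = b * (2 * σ + 2) + 2 * σ by omega,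
      show b * (2 * σ + 2) + (2 * (σ - 1) + 1) + 2 = b * (2 * σ + 2) + (2 * σ + 1) by omega,
      getD_Sstr_even hbσ le_rfl, getD_Sstr_odd hbσ le_rfl]
    simp
  · have hlast := mul_add_self_of_succ_eq (show σ - 2 + 1 = σ - 1 by omega) (2 * σ + 2)
    rw [cyc_three_of_lt (by omega), getD_Sstr_odd (by omega) le_rfl,
      show (σ - 2) * (2 * σ + 2) + (2 * σ + 1) + 1 = (σ - 1) * (2 * σ + 2) + 0 by omega,
      show (σ - 2) * (2 * σ + 2) + (2 * σ + 1) + 2 = (σ - 1) * (2 * σ + 2) + 1 by omega,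
      getD_Sstr_tail (by omega), getD_Sstr_tail (by omega)]
    simp
    omega

theorem cyc_Sstr_occZero {σ b : ℕ} (hσ : 2 ≤ σ) (hb : b < σ) :
    cyc (Sstr σ) (occZero σ b) 3 = [σ - 1, b, 0] := by
  have hlen := length_Sstr σ
  unfold occZero
  split_ifs with hb0 hbσ
  · subst hb0
    rw [cyc_three, hlen, Nat.mod_eq_of_lt (by omega), getD_Sstr_tail (by omega),
      show (σ - 1) * (2 * σ + 2) + 1 + 1 = (σ - 1) * (2 * σ + 2) + 2 + 0 by omega,
      show (σ - 1) * (2 * σ + 2) + 1 + 2 = (σ - 1) * (2 * σ + 2) + 2 + 1 by omega,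
      Nat.add_mod_left, Nat.add_mod_left, Nat.zero_mod, Nat.mod_eq_of_lt (by omega),
      getD_Sstr_zero hσ, getD_Sstr_one hσ]
  · have hstep := mul_add_self_of_succ_eq (show b - 1 + 1 = b by omega) (2 * σ + 2)
    have := add_block_le hbσ
    rw [cyc_three_of_lt (by omega), getD_Sstr_odd (by omega) le_rfl,
      show (b - 1) * (2 * σ + 2) + (2 * σ + 1) + 1 = b * (2 * σ + 2) + 2 * 0 by omega,
      show (b - 1) * (2 * σ + 2) + (2 * σ + 1) + 2 = b * (2 * σ + 2) + (2 * 0 + 1) by omega,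
      getD_Sstr_even hbσ (by omega), getD_Sstr_odd hbσ (by omega)]
    simp
  · obtain rfl : b = σ - 1 := by omega
    have htail := getD_Sstr_tail (σ := σ) (r := 0) (by omega)
    rw [add_zero] at htail
    rw [cyc_three, hlen, Nat.mod_eq_of_lt (by omega), Nat.mod_eq_of_lt (by omega), Nat.mod_self,
      htail, getD_Sstr_tail (by omega), getD_Sstr_zero hσ]

theorem occTop_ne_occZero {σ b : ℕ} (hσ : 2 ≤ σ) (hb : b < σ) :
    occTop σ b ≠ occZero σ b := by
  intro h
  have := cyc_Sstr_occTop hσ hb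
  rw [h, cyc_Sstr_occZero hσ hb] at this
  simp at this
  omega

theorem exists_eq_occTop_or_eq_occZero {σ i : ℕ} (hσ : 2 ≤ σ) (hi : i < (Sstr σ).length)
    (h : (Sstr σ).getD i 0 = σ - 1) : ∃ b < σ, i = occTop σ b ∨ i = occZero σ b := by
  rw [length_Sstr] at hi
  by_cases hblocks : i < (σ - 1) * (2 * σ + 2)
  · have hq : i / (2 * σ + 2) < σ - 1 := Nat.div_lt_of_lt_mul (by rwa [mul_comm])
    have hr : i % (2 * σ + 2) < 2 * σ + 2 := Nat.mod_lt _ (by omega)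
    have hqr := Nat.div_add_mod' i (2 * σ + 2)
    generalize i / (2 * σ + 2) = q, i % (2 * σ + 2) = r at hq hr hqr
    subst hqr
    obtain ⟨j, rfl | rfl⟩ := Nat.even_or_odd' r
    · rw [getD_Sstr_even hq (by omega)] at h
      omega
    · rw [getD_Sstr_odd hq (by omega)] at h
      have := add_block_le hq
      obtain rfl | hj : j = σ - 1 ∨ j = σ := by omega
      · exact ⟨q, by omega, Or.inl (by rw [occTop, if_pos hq])⟩
      · rw [hj]
        by_cases hq' : q + 1 < σ - 1
        · refine ⟨q + 1, by omega, Or.inr ?_⟩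
          rw [occZero, if_neg (by omega), if_pos hq', Nat.add_sub_cancel]
        · refine ⟨σ - 1, by omega, Or.inl ?_⟩
          rw [occTop, if_neg (by omega), show q = σ - 2 by omega]
  · obtain rfl | rfl : i = (σ - 1) * (2 * σ + 2) ∨ i = (σ - 1) * (2 * σ + 2) + 1 := by omega
    · exact ⟨σ - 1, by omega, Or.inr (by rw [occZero, if_neg (by omega), if_neg (by omega)])⟩
    · exact ⟨0, by omega, Or.inr (by rw [occZero, if_pos rfl])⟩

theorem cyc_Sstr_two_eq_iff {σ b i : ℕ} (hσ : 2 ≤ σ) (hb : b < σ)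
    (hi : i < (Sstr σ).length) :
    cyc (Sstr σ) i 2 = [σ - 1, b] ↔ i = occTop σ b ∨ i = occZero σ b := by
  constructor
  · intro h
    have hhead : (Sstr σ).getD i 0 = σ - 1 := by
      rw [cyc_two, Nat.mod_eq_of_lt hi] at h
      exact (cons.inj h).1
    obtain ⟨b', hb', hocc | hocc⟩ := exists_eq_occTop_or_eq_occZero hσ hi hhead
    · have := cyc_two_of_cyc_three (hocc ▸ cyc_Sstr_occTop hσ hb')
      obtain rfl : b = b' := by simp_all
      exact Or.inl hocc
    · have := cyc_two_of_cyc_three (hocc ▸ cyc_Sstr_occZero hσ hb')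
      obtain rfl : b = b' := by simp_all
      exact Or.inr hocc
  · rintro (rfl | rfl)
    · exact cyc_two_of_cyc_three (cyc_Sstr_occTop hσ hb)
    · exact cyc_two_of_cyc_three (cyc_Sstr_occZero hσ hb)

theorem filter_cyc_Sstr_two_eq {σ b : ℕ} (hσ : 2 ≤ σ) (hb : b < σ) :
    ((Finset.range (Sstr σ).length).filter fun i => cyc (Sstr σ) i 2 = [σ - 1, b]) =
      {occTop σ b, occZero σ b} := by
  ext i
  simp only [Finset.mem_filter, Finset.mem_range, Finset.mem_insert, Finset.mem_singleton]
  refine ⟨fun ⟨hi, h⟩ => (cyc_Sstr_two_eq_iff hσ hb hi).1 h, ?_⟩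
  rintro (rfl | rfl)
  · exact ⟨occTop_lt_length hσ b, cyc_two_of_cyc_three (cyc_Sstr_occTop hσ hb)⟩
  · exact ⟨occZero_lt_length σ b, cyc_two_of_cyc_three (cyc_Sstr_occZero hσ hb)⟩

/-- for b < σ, the 2-gram (σ-1)b occurs exactly twice cyclically
in S_σ, and its set of 3-gram extensions is exactly {σ-1, 0}. -/
theorem stmt3 (σ : ℕ) (hσ : 2 ≤ σ) (b : ℕ) (hb : b < σ) :
    cOcc (Sstr σ) [σ - 1, b] = 2 ∧
    {c | c < σ ∧ cOccurs (Sstr σ) [σ - 1, b, c]} = ({σ - 1, 0} : Set ℕ) := by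
  refine ⟨?_, ?_⟩
  · simp only [cOcc_eq_card, length_cons, length_nil]
    rw [filter_cyc_Sstr_two_eq hσ hb, Finset.card_pair (occTop_ne_occZero hσ hb)]
  · ext c
    simp only [Set.mem_ofPred_eq, Set.mem_insert_iff, Set.mem_singleton_iff, cOccurs_iff,
      length_cons, length_nil]
    constructor
    · rintro ⟨-, i, hi, h⟩
      rcases (cyc_Sstr_two_eq_iff hσ hb hi).1 (cyc_two_of_cyc_three h) with rfl | rfl
      · rw [cyc_Sstr_occTop hσ hb] at h
        exact .inl (by simpa using h.symm)
      · rw [cyc_Sstr_occZero hσ hb] at h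
        exact .inr (by simpa using h.symm)
    · rintro (rfl | rfl)
      · exact ⟨by omega, _, occTop_lt_length hσ b, cyc_Sstr_occTop hσ hb⟩
      · exact ⟨by omega, _, occZero_lt_length σ b, cyc_Sstr_occZero hσ hb⟩
end

section
/- Viewing S_σ as a cyclic string, every 2-gram ab over Σ occurs in S_σ, and its set of 3-gram extensions is exactly {a, (a+1) mod σ}; in particular every 2-gram admits exactly two distinct 3-gram extensions. -/
open List

def Rr (σ t : ℕ) : ℕ := t / (σ+1)
def Cc (σ t : ℕ) : ℕ := if t = σ*σ - 1 then σ - 1 else min (t % (σ+1)) (σ-1)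
def vv (σ i : ℕ) : ℕ := if i % 2 = 0 then Rr σ (i/2) else Cc σ (i/2)


lemma grid (m : ℕ) (F : ℕ → List ℕ) : ∀ n, (List.range (n*m)).flatMap F
    = (List.range n).flatMap (fun a => (List.range m).flatMap (fun p => F (a*m+p))) := by
  intro n
  induction n with
  | zero => simp
  | succ n ih =>
    rw [List.range_succ, Nat.succ_mul, List.range_add, List.flatMap_append, ih,
      List.flatMap_append]
    congr 1
    simp [List.flatMap_map]

lemma pairFlat (g h : ℕ → ℕ) : ∀ n, (List.range n).flatMap (fun t => [g t, h t])
    = (List.range (2*n)).map (fun i => if i % 2 = 0 then g (i/2) else h (i/2)) := by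
  intro n
  induction n with
  | zero => simp
  | succ n ih =>
    have h2 : 2*(n+1) = 2*n + 2 := by ring
    rw [List.range_succ, List.flatMap_append, ih, h2, List.range_add, List.map_append]
    congr 1
    have e0 : (2*n) % 2 = 0 := by omega
    have e1 : (2*n+1) % 2 = 1 := by omega
    have d0 : (2*n)/2 = n := by omega
    have d1 : (2*n+1)/2 = n := by omega
    simp [List.range_succ, e0, e1, d0, d1]

lemma sqm1 (σ : ℕ) (hσ : 2 ≤ σ) : (σ-1)*(σ+1) = σ*σ - 1 := by
  obtain ⟨s, rfl⟩ : ∃ s, σ = s+1 := ⟨σ-1, by omega⟩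
  have h : s*(s+1+1) + 1 = (s+1)*(s+1) := by ring
  simp only [Nat.add_sub_cancel]
  omega

lemma block_eq (σ a : ℕ) :
    block σ a = (List.range (σ+1)).flatMap (fun p => [a, min p (σ-1)]) := by
  unfold block
  rw [List.range_succ, List.flatMap_append]
  congr 1
  · apply List.flatMap_congr
    intro b hb
    rw [List.mem_range] at hb
    have : min b (σ-1) = b := by omega
    rw [this]
  · simp

lemma Rval (σ a p : ℕ) (hp : p < σ+1) : Rr σ (a*(σ+1)+p) = a := by
  unfold Rr
  rw [Nat.add_comm, Nat.add_mul_div_right _ _ (by omega : 0 < σ+1)]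
  simp [Nat.div_eq_of_lt hp]

lemma tbound (σ a p : ℕ) (hσ : 2 ≤ σ) (ha : a < σ - 1) (hp : p < σ + 1) :
    a*(σ+1)+p < σ*σ - 1 := by
  have h1 : a*(σ+1)+p < (σ-1)*(σ+1) := by
    calc a*(σ+1)+p < a*(σ+1)+(σ+1) := by omega
    _ = (a+1)*(σ+1) := by ring
    _ ≤ (σ-1)*(σ+1) := Nat.mul_le_mul_right _ (by omega)
  rw [sqm1 σ hσ] at h1
  exact h1

lemma Cval (σ a p : ℕ) (hp : p < σ+1) (hne : a*(σ+1)+p ≠ σ*σ - 1) :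
    Cc σ (a*(σ+1)+p) = min p (σ-1) := by
  unfold Cc
  rw [if_neg hne, Nat.add_comm, Nat.add_mul_mod_self_right, Nat.mod_eq_of_lt hp]

lemma Sstr_eq (σ : ℕ) (hσ : 2 ≤ σ) :
    Sstr σ = (List.range (2*(σ*σ))).map (vv σ) := by
  unfold Sstr
  have h1 : ∀ a ∈ List.range (σ-1), block σ a
      = (List.range (σ+1)).flatMap (fun p => [Rr σ (a*(σ+1)+p), Cc σ (a*(σ+1)+p)]) := by
    intro a ha
    rw [List.mem_range] at ha
    rw [block_eq]
    apply List.flatMap_congr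
    intro p hp
    rw [List.mem_range] at hp
    have hne : a*(σ+1)+p ≠ σ*σ - 1 := Nat.ne_of_lt (tbound σ a p hσ ha hp)
    rw [Rval σ a p hp, Cval σ a p hp hne]
  rw [List.flatMap_congr h1]
  have h2 : (List.range (σ-1)).flatMap (fun a => (List.range (σ+1)).flatMap
      (fun p => [Rr σ (a*(σ+1)+p), Cc σ (a*(σ+1)+p)]))
      = (List.range ((σ-1)*(σ+1))).flatMap (fun t => [Rr σ t, Cc σ t]) :=
    (grid (σ+1) (fun t => [Rr σ t, Cc σ t]) (σ-1)).symm
  rw [h2, sqm1 σ hσ]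
  have hR : Rr σ (σ*σ-1) = σ-1 := by
    unfold Rr
    rw [← sqm1 σ hσ, Nat.mul_div_cancel _ (by omega : 0 < σ+1)]
  have hC : Cc σ (σ*σ-1) = σ-1 := by unfold Cc; rw [if_pos rfl]
  have h3 : ([σ-1, σ-1] : List ℕ) = [Rr σ (σ*σ-1), Cc σ (σ*σ-1)] := by rw [hR, hC]
  rw [h3]
  have h5 : 4 ≤ σ*σ := Nat.mul_le_mul hσ hσ
  have h4 : List.range (σ*σ) = List.range (σ*σ-1) ++ [σ*σ-1] := by
    have he : σ*σ = (σ*σ-1) + 1 := by omega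
    rw [he, List.range_succ]
    simp
  have h6 : (List.range (σ*σ)).flatMap (fun t => [Rr σ t, Cc σ t])
      = (List.range (σ*σ-1)).flatMap (fun t => [Rr σ t, Cc σ t])
        ++ [Rr σ (σ*σ-1), Cc σ (σ*σ-1)] := by
    rw [h4, List.flatMap_append]; simp
  rw [← h6, pairFlat]
  rfl


lemma Slen (σ : ℕ) (hσ : 2 ≤ σ) : (Sstr σ).length = 2*(σ*σ) := by
  rw [Sstr_eq σ hσ]; simp

lemma SgetD (σ : ℕ) (hσ : 2 ≤ σ) (i : ℕ) (hi : i < 2*(σ*σ)) :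
    (Sstr σ).getD i 0 = vv σ i := by
  rw [Sstr_eq σ hσ, List.getD_eq_getElem _ _ (by simpa using hi)]
  simp

lemma cyc3 (σ : ℕ) (hσ : 2 ≤ σ) (i : ℕ) :
    cyc (Sstr σ) i 3 = [vv σ (i % (2*(σ*σ))), vv σ ((i+1) % (2*(σ*σ))),
      vv σ ((i+2) % (2*(σ*σ)))] := by
  have hL : 0 < 2*(σ*σ) := by have := Nat.mul_le_mul hσ hσ; omega
  unfold cyc
  rw [Slen σ hσ]
  have h : ∀ j : ℕ, (Sstr σ).getD ((i+j) % (2*(σ*σ))) 0 = vv σ ((i+j) % (2*(σ*σ))) :=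
    fun j => SgetD σ hσ _ (Nat.mod_lt _ hL)
  simp only [List.range_succ, List.range_zero, List.map_append, List.map_cons, List.map_nil,
    h]
  norm_num

lemma cyc_succ (S : List ℕ) (i k : ℕ) :
    cyc S i (k+1) = cyc S i k ++ [S.getD ((i+k) % S.length) 0] := by
  unfold cyc
  rw [List.range_succ, List.map_append]
  simp

lemma occ_iff (S u : List ℕ) :
    cOccurs S u ↔ ∃ i, i < S.length ∧ cyc S i u.length = u := by
  unfold cOccurs cOcc
  rw [← List.countP_eq_length_filter, List.countP_pos_iff]
  simp

lemma occ_drop (S u : List ℕ) (c : ℕ) (h : cOccurs S (u ++ [c])) : cOccurs S u := by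
  rw [occ_iff] at h ⊢
  obtain ⟨i, hi, h⟩ := h
  refine ⟨i, hi, ?_⟩
  rw [List.length_append, List.length_singleton, cyc_succ] at h
  exact (List.append_inj' h (by simp)).1

lemma vv_even (σ t : ℕ) : vv σ (2*t) = Rr σ t := by
  unfold vv
  have e0 : (2*t) % 2 = 0 := by omega
  have d0 : (2*t)/2 = t := by omega
  rw [e0, d0]; simp

lemma vv_odd (σ t : ℕ) : vv σ (2*t+1) = Cc σ t := by
  unfold vv
  have e1 : (2*t+1) % 2 = 1 := by omega
  have d1 : (2*t+1)/2 = t := by omega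
  rw [d1, e1]; simp

lemma Rlast (σ : ℕ) (hσ : 2 ≤ σ) : Rr σ (σ*σ-1) = σ-1 := by
  unfold Rr
  rw [← sqm1 σ hσ, Nat.mul_div_cancel _ (by omega : 0 < σ+1)]

lemma Clast (σ : ℕ) : Cc σ (σ*σ-1) = σ-1 := by unfold Cc; rw [if_pos rfl]

lemma Rstep (σ : ℕ) (hσ : 2 ≤ σ) (t : ℕ) (ht : t+1 < σ*σ) :
    Rr σ (t+1) = Rr σ t ∨ Rr σ (t+1) = (Rr σ t + 1) % σ := by
  have hdm := Nat.div_add_mod t (σ+1)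
  have hmlt := Nat.mod_lt t (by omega : 0 < σ+1)
  set q := t / (σ+1) with hq
  set r := t % (σ+1) with hr
  have hRt : Rr σ t = q := rfl
  have hc : (σ+1)*q = q*(σ+1) := Nat.mul_comm _ _
  by_cases h : r < σ
  · left
    have e : t+1 = q*(σ+1)+(r+1) := by omega
    rw [e, Rval σ q (r+1) (by omega), hRt]
  · right
    have hr2 : r = σ := by omega
    have e : t+1 = (q+1)*(σ+1)+0 := by
      have : (q+1)*(σ+1) = q*(σ+1)+(σ+1) := by ring
      omega
    rw [e, Rval σ (q+1) 0 (by omega), hRt]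
    have hqlt : q+1 < σ := by
      by_contra hcon
      have h1 : σ*(σ+1) ≤ (q+1)*(σ+1) := Nat.mul_le_mul_right _ (by omega)
      have h2 : σ*(σ+1) = σ*σ+σ := by ring
      omega
    rw [Nat.mod_eq_of_lt hqlt]

lemma Cstep (σ : ℕ) (hσ : 2 ≤ σ) (t : ℕ) (ht : t+1 < σ*σ) :
    Cc σ (t+1) = Cc σ t ∨ Cc σ (t+1) = (Cc σ t + 1) % σ := by
  have hL : 4 ≤ σ*σ := Nat.mul_le_mul hσ hσ
  have hdm := Nat.div_add_mod t (σ+1)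
  have hmlt := Nat.mod_lt t (by omega : 0 < σ+1)
  set q := t / (σ+1) with hq
  set r := t % (σ+1) with hr
  have hc : (σ+1)*q = q*(σ+1) := Nat.mul_comm _ _
  have htne : t ≠ σ*σ-1 := by omega
  have hCt : Cc σ t = min r (σ-1) := by
    have e : t = q*(σ+1)+r := by omega
    rw [e] at htne ⊢
    rw [Cval σ q r (by omega) htne]
  by_cases hsp : t+1 = σ*σ-1
  · left
    rw [hsp, Clast σ, hCt]
    -- show min r (σ-1) = σ-1, i.e. r = σ
    have e2 : σ*σ-2 = (σ-2)*(σ+1)+σ := by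
      obtain ⟨s, rfl⟩ : ∃ s, σ = s+2 := ⟨σ-2, by omega⟩
      simp only [Nat.add_sub_cancel]
      have : s*(s+2+1)+(s+2)+2 = (s+2)*(s+2) := by ring
      omega
    have ht2 : t = (σ-2)*(σ+1)+σ := by omega
    have hrσ : r = σ := by
      rw [hr, ht2, Nat.add_comm, Nat.add_mul_mod_self_right, Nat.mod_eq_of_lt (by omega)]
    rw [hrσ]
    omega
  · by_cases h1 : r < σ-1
    · right
      have e : t+1 = q*(σ+1)+(r+1) := by omega
      rw [e, Cval σ q (r+1) (by omega) (by omega), hCt]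
      have : min (r+1) (σ-1) = r+1 := by omega
      rw [this]
      have : min r (σ-1) = r := by omega
      rw [this, Nat.mod_eq_of_lt (by omega)]
    · by_cases h2 : r = σ-1
      · left
        have e : t+1 = q*(σ+1)+σ := by omega
        rw [e, Cval σ q σ (by omega) (by omega), hCt]
        omega
      · right
        have hr2 : r = σ := by omega
        have e : t+1 = (q+1)*(σ+1)+0 := by
          have : (q+1)*(σ+1) = q*(σ+1)+(σ+1) := by ring
          omega
        rw [e, Cval σ (q+1) 0 (by omega) (by rw [← e]; exact hsp), hCt]
        have h3 : min r (σ-1) = σ-1 := by omega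
        rw [h3]
        have h4 : σ-1+1 = σ := by omega
        rw [h4, Nat.mod_self]
        omega

lemma vzero (σ : ℕ) (hσ : 2 ≤ σ) : vv σ 0 = 0 := by
  have : vv σ 0 = Rr σ 0 := by simpa using vv_even σ 0
  rw [this]; unfold Rr; simp

lemma vone (σ : ℕ) (hσ : 2 ≤ σ) : vv σ 1 = 0 := by
  have hL : 4 ≤ σ*σ := Nat.mul_le_mul hσ hσ
  have : vv σ 1 = Cc σ 0 := by simpa using vv_odd σ 0
  rw [this]; unfold Cc
  rw [if_neg (by omega)]
  simp

lemma third (σ : ℕ) (hσ : 2 ≤ σ) (i : ℕ) (hi : i < 2*(σ*σ)) :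
    vv σ ((i+2) % (2*(σ*σ))) = vv σ i ∨
    vv σ ((i+2) % (2*(σ*σ))) = (vv σ i + 1) % σ := by
  have hL : 4 ≤ σ*σ := Nat.mul_le_mul hσ hσ
  by_cases h : i + 2 < 2*(σ*σ)
  · rw [Nat.mod_eq_of_lt h]
    obtain ⟨t, rfl | rfl⟩ : ∃ t, i = 2*t ∨ i = 2*t+1 := ⟨i/2, by omega⟩
    · have e : 2*t+2 = 2*(t+1) := by ring
      rw [e, vv_even, vv_even]
      exact Rstep σ hσ t (by omega)
    · have e : 2*t+1+2 = 2*(t+1)+1 := by ring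
      rw [e, vv_odd, vv_odd]
      exact Cstep σ hσ t (by omega)
  · right
    rcases (by omega : i = 2*(σ*σ)-2 ∨ i = 2*(σ*σ)-1) with rfl | rfl
    · have e1 : 2*(σ*σ)-2 = 2*(σ*σ-1) := by omega
      have e2 : (2*(σ*σ-1)+2) % (2*(σ*σ)) = 0 := by
        have : 2*(σ*σ-1)+2 = 2*(σ*σ) := by omega
        rw [this, Nat.mod_self]
      rw [e1, e2, vv_even, Rlast σ hσ, vzero σ hσ]
      have : σ-1+1 = σ := by omega
      rw [this, Nat.mod_self]
    · have e1 : 2*(σ*σ)-1 = 2*(σ*σ-1)+1 := by omega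
      have e2 : (2*(σ*σ-1)+1+2) % (2*(σ*σ)) = 1 := by
        have h3 : 2*(σ*σ-1)+1+2 = 2*(σ*σ)+1 := by omega
        rw [h3, Nat.add_mod_left, Nat.mod_eq_of_lt (by omega)]
      rw [e1, e2, vv_odd, Clast σ, vone σ hσ]
      have : σ-1+1 = σ := by omega
      rw [this, Nat.mod_self]

lemma cyc_even (σ : ℕ) (hσ : 2 ≤ σ) (t : ℕ) (ht : t+1 < σ*σ) :
    cyc (Sstr σ) (2*t) 3 = [Rr σ t, Cc σ t, Rr σ (t+1)] := by
  rw [cyc3 σ hσ]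
  have h0 : 2*t % (2*(σ*σ)) = 2*t := Nat.mod_eq_of_lt (by omega)
  have h1 : (2*t+1) % (2*(σ*σ)) = 2*t+1 := Nat.mod_eq_of_lt (by omega)
  have h2 : (2*t+2) % (2*(σ*σ)) = 2*(t+1) := by
    rw [Nat.mod_eq_of_lt (by omega)]; ring
  rw [h0, h1, h2, vv_even, vv_odd, vv_even]

lemma cyc_odd (σ : ℕ) (hσ : 2 ≤ σ) (t : ℕ) (ht : t+1 < σ*σ) :
    cyc (Sstr σ) (2*t+1) 3 = [Cc σ t, Rr σ (t+1), Cc σ (t+1)] := by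
  rw [cyc3 σ hσ]
  have h0 : (2*t+1) % (2*(σ*σ)) = 2*t+1 := Nat.mod_eq_of_lt (by omega)
  have h1 : (2*t+1+1) % (2*(σ*σ)) = 2*(t+1) := by
    rw [Nat.mod_eq_of_lt (by omega)]; ring
  have h2 : (2*t+1+2) % (2*(σ*σ)) = 2*(t+1)+1 := by
    rw [Nat.mod_eq_of_lt (by omega)]; ring
  rw [h0, h1, h2, vv_odd, vv_even, vv_odd]

lemma occ3_of (σ : ℕ) (hσ : 2 ≤ σ) (i a b c : ℕ) (hi : i < 2*(σ*σ))
    (h : cyc (Sstr σ) i 3 = [a, b, c]) : cOccurs (Sstr σ) [a, b, c] := by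
  rw [occ_iff]
  exact ⟨i, by rw [Slen σ hσ]; exact hi, h⟩

lemma P1 (σ a b : ℕ) (hσ : 2 ≤ σ) (ha : a+1 < σ) (hb : b < σ) :
    cOccurs (Sstr σ) [a, b, a] := by
  have hL : 4 ≤ σ*σ := Nat.mul_le_mul hσ hσ
  have hbd := tbound σ a (b+1) hσ (by omega) (by omega)
  have hbd0 := tbound σ a b hσ (by omega) (by omega)
  apply occ3_of σ hσ (2*(a*(σ+1)+b)) _ _ _ (by omega)
  rw [cyc_even σ hσ _ (by omega)]
  have e : a*(σ+1)+b+1 = a*(σ+1)+(b+1) := by omega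
  rw [Rval σ a b (by omega), Cval σ a b (by omega) (by omega), e,
    Rval σ a (b+1) (by omega)]
  have : min b (σ-1) = b := by omega
  rw [this]

lemma P2 (σ a b : ℕ) (hσ : 2 ≤ σ) (ha : a+1 < σ) (hb : b+1 < σ) :
    cOccurs (Sstr σ) [a, b, a+1] := by
  have hL : 4 ≤ σ*σ := Nat.mul_le_mul hσ hσ
  have hbd := tbound σ b (a+1) hσ (by omega) (by omega)
  have hbd0 := tbound σ b a hσ (by omega) (by omega)
  apply occ3_of σ hσ (2*(b*(σ+1)+a)+1) _ _ _ (by omega)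
  rw [cyc_odd σ hσ _ (by omega)]
  have e : b*(σ+1)+a+1 = b*(σ+1)+(a+1) := by omega
  rw [Cval σ b a (by omega) (by omega), e, Rval σ b (a+1) (by omega),
    Cval σ b (a+1) (by omega) (by omega)]
  have h1 : min a (σ-1) = a := by omega
  have h2 : min (a+1) (σ-1) = a+1 := by omega
  rw [h1, h2]

lemma P3 (σ a : ℕ) (hσ : 2 ≤ σ) (ha : a+1 < σ) :
    cOccurs (Sstr σ) [a, σ-1, a+1] := by
  have hL : 4 ≤ σ*σ := Nat.mul_le_mul hσ hσ
  have hbd := tbound σ a σ hσ (by omega) (by omega)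
  apply occ3_of σ hσ (2*(a*(σ+1)+σ)) _ _ _ (by omega)
  rw [cyc_even σ hσ _ (by omega)]
  have e : a*(σ+1)+σ+1 = (a+1)*(σ+1)+0 := by
    have : (a+1)*(σ+1) = a*(σ+1)+(σ+1) := by ring
    omega
  rw [Rval σ a σ (by omega), Cval σ a σ (by omega) (by omega), e,
    Rval σ (a+1) 0 (by omega)]
  have : min σ (σ-1) = σ-1 := by omega
  rw [this]

lemma P4 (σ b : ℕ) (hσ : 2 ≤ σ) (hb : b+1 < σ) :
    cOccurs (Sstr σ) [σ-1, b, σ-1] := by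
  have hL : 4 ≤ σ*σ := Nat.mul_le_mul hσ hσ
  have hbd := tbound σ b σ hσ (by omega) (by omega)
  have hbd0 := tbound σ b (σ-1) hσ (by omega) (by omega)
  apply occ3_of σ hσ (2*(b*(σ+1)+(σ-1))+1) _ _ _ (by omega)
  rw [cyc_odd σ hσ _ (by omega)]
  have e : b*(σ+1)+(σ-1)+1 = b*(σ+1)+σ := by omega
  rw [Cval σ b (σ-1) (by omega) (by omega), e, Rval σ b σ (by omega),
    Cval σ b σ (by omega) (by omega)]
  have h1 : min (σ-1) (σ-1) = σ-1 := by omega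
  have h2 : min σ (σ-1) = σ-1 := by omega
  rw [h1, h2]

lemma P5 (σ : ℕ) (hσ : 2 ≤ σ) : cOccurs (Sstr σ) [σ-1, σ-1, σ-1] := by
  have hL : 4 ≤ σ*σ := Nat.mul_le_mul hσ hσ
  apply occ3_of σ hσ (2*(σ*σ-2)+1) _ _ _ (by omega)
  rw [cyc_odd σ hσ _ (by omega)]
  have e2 : σ*σ-2 = (σ-2)*(σ+1)+σ := by
    obtain ⟨s, rfl⟩ : ∃ s, σ = s+2 := ⟨σ-2, by omega⟩
    simp only [Nat.add_sub_cancel]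
    have : s*(s+2+1)+(s+2)+2 = (s+2)*(s+2) := by ring
    omega
  have e3 : σ*σ-2+1 = σ*σ-1 := by omega
  have hC : Cc σ (σ*σ-2) = σ-1 := by
    rw [e2, Cval σ (σ-2) σ (by omega) (by rw [← e2]; omega)]
    omega
  rw [e3, hC, Rlast σ hσ, Clast σ]

lemma P6 (σ b : ℕ) (hσ : 2 ≤ σ) (hb0 : 0 < b) (hb : b+1 < σ) :
    cOccurs (Sstr σ) [σ-1, b, 0] := by
  have hL : 4 ≤ σ*σ := Nat.mul_le_mul hσ hσ
  have hbd := tbound σ (b-1) σ hσ (by omega) (by omega)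
  have hbd2 := tbound σ b 0 hσ (by omega) (by omega)
  apply occ3_of σ hσ (2*((b-1)*(σ+1)+σ)+1) _ _ _ (by omega)
  rw [cyc_odd σ hσ _ (by omega)]
  have e : (b-1)*(σ+1)+σ+1 = b*(σ+1)+0 := by
    obtain ⟨b', rfl⟩ : ∃ b', b = b'+1 := ⟨b-1, by omega⟩
    simp only [Nat.add_sub_cancel]
    have : (b'+1)*(σ+1) = b'*(σ+1)+(σ+1) := by ring
    omega
  rw [Cval σ (b-1) σ (by omega) (by omega), e, Rval σ b 0 (by omega),
    Cval σ b 0 (by omega) (by omega)]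
  have h1 : min σ (σ-1) = σ-1 := by omega
  have h2 : min 0 (σ-1) = 0 := by omega
  rw [h1, h2]

lemma P7 (σ : ℕ) (hσ : 2 ≤ σ) : cOccurs (Sstr σ) [σ-1, 0, 0] := by
  have hL : 4 ≤ σ*σ := Nat.mul_le_mul hσ hσ
  apply occ3_of σ hσ (2*(σ*σ-1)+1) _ _ _ (by omega)
  rw [cyc3 σ hσ]
  have h0 : (2*(σ*σ-1)+1) % (2*(σ*σ)) = 2*(σ*σ-1)+1 := Nat.mod_eq_of_lt (by omega)
  have h1 : (2*(σ*σ-1)+1+1) % (2*(σ*σ)) = 0 := by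
    have : 2*(σ*σ-1)+1+1 = 2*(σ*σ) := by omega
    rw [this, Nat.mod_self]
  have h2 : (2*(σ*σ-1)+1+2) % (2*(σ*σ)) = 1 := by
    have : 2*(σ*σ-1)+1+2 = 2*(σ*σ)+1 := by omega
    rw [this, Nat.add_mod_left, Nat.mod_eq_of_lt (by omega)]
  rw [h0, h1, h2, vv_odd, Clast σ, vzero σ hσ, vone σ hσ]

lemma P8 (σ : ℕ) (hσ : 2 ≤ σ) : cOccurs (Sstr σ) [σ-1, σ-1, 0] := by
  have hL : 4 ≤ σ*σ := Nat.mul_le_mul hσ hσ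
  apply occ3_of σ hσ (2*(σ*σ-1)) _ _ _ (by omega)
  rw [cyc3 σ hσ]
  have h0 : (2*(σ*σ-1)) % (2*(σ*σ)) = 2*(σ*σ-1) := Nat.mod_eq_of_lt (by omega)
  have h1 : (2*(σ*σ-1)+1) % (2*(σ*σ)) = 2*(σ*σ-1)+1 := Nat.mod_eq_of_lt (by omega)
  have h2 : (2*(σ*σ-1)+2) % (2*(σ*σ)) = 0 := by
    have : 2*(σ*σ-1)+2 = 2*(σ*σ) := by omega
    rw [this, Nat.mod_self]
  rw [h0, h1, h2, vv_even, vv_odd, Rlast σ hσ, Clast σ, vzero σ hσ]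


/-- every 2-gram `ab` over Σ occurs cyclically in S_σ, its set of
3-gram extensions is exactly {a, (a+1) mod σ}, and in particular it admits
exactly two distinct extensions. -/
theorem stmt4 (σ : ℕ) (hσ : 2 ≤ σ) (a b : ℕ) (ha : a < σ) (hb : b < σ) :
    cOccurs (Sstr σ) [a, b] ∧
    {c | c < σ ∧ cOccurs (Sstr σ) [a, b, c]} = ({a, (a + 1) % σ} : Set ℕ) ∧
    {c | c < σ ∧ cOccurs (Sstr σ) [a, b, c]}.ncard = 2 := by
  have hL : 4 ≤ σ*σ := Nat.mul_le_mul hσ hσ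
  have key1 : cOccurs (Sstr σ) [a, b, a] := by
    by_cases h : a+1 < σ
    · exact P1 σ a b hσ h hb
    · have ha' : a = σ-1 := by omega
      subst ha'
      by_cases h2 : b+1 < σ
      · exact P4 σ b hσ h2
      · have hb' : b = σ-1 := by omega
        subst hb'
        exact P5 σ hσ
  have key2 : cOccurs (Sstr σ) [a, b, (a+1) % σ] := by
    by_cases h : a+1 < σ
    · rw [Nat.mod_eq_of_lt h]
      by_cases h2 : b+1 < σ
      · exact P2 σ a b hσ h h2
      · have hb' : b = σ-1 := by omega
        subst hb'
        exact P3 σ a hσ h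
    · have ha' : a = σ-1 := by omega
      subst ha'
      have hm : (σ-1+1) % σ = 0 := by
        rw [show σ-1+1 = σ by omega, Nat.mod_self]
      rw [hm]
      by_cases hb0 : b = 0
      · subst hb0; exact P7 σ hσ
      · by_cases h2 : b+1 < σ
        · exact P6 σ b hσ (by omega) h2
        · have hb' : b = σ-1 := by omega
          subst hb'
          exact P8 σ hσ
  have keyneg : ∀ c, cOccurs (Sstr σ) [a, b, c] → c = a ∨ c = (a+1) % σ := by
    intro c hc
    rw [occ_iff] at hc
    obtain ⟨i, hi, hc⟩ := hc
    rw [Slen σ hσ] at hi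
    rw [show ([a,b,c] : List ℕ).length = 3 from rfl, cyc3 σ hσ] at hc
    rw [Nat.mod_eq_of_lt hi] at hc
    simp only [List.cons.injEq, and_true] at hc
    obtain ⟨h1, _, h3⟩ := hc
    rcases third σ hσ i hi with h | h
    · left; rw [← h1, ← h3, h]
    · right; rw [← h1, ← h3, h]
  have hset : {c | c < σ ∧ cOccurs (Sstr σ) [a, b, c]} = ({a, (a+1)%σ} : Set ℕ) := by
    ext c
    simp only [Set.mem_setOf_eq, Set.mem_insert_iff, Set.mem_singleton_iff]
    constructor
    · rintro ⟨_, hocc⟩; exact keyneg c hocc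
    · rintro (rfl | rfl)
      · exact ⟨ha, key1⟩
      · exact ⟨Nat.mod_lt _ (by omega), key2⟩
  have hne : a ≠ (a+1) % σ := by
    by_cases h : a+1 < σ
    · rw [Nat.mod_eq_of_lt h]; omega
    · rw [show a+1 = σ by omega, Nat.mod_self]; omega
  refine ⟨?_, hset, by rw [hset]; exact Set.ncard_pair hne⟩
  exact occ_drop _ _ _ ((show ([a,b] : List ℕ) ++ [a] = [a,b,a] from rfl) ▸ key1)
end

section
/- For any linearization t of any rotation of S_σ, the size χ(t) of the smallest suffixient set of t$ equals 2σ² + 1. -/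
open List

/-- the length-3 window at position i -/
def win3 (W : List ℕ) (i : ℕ) : List ℕ := (W.drop i).take 3

lemma win3_infix (W : List ℕ) (i : ℕ) : win3 W i <:+: W :=
  ((W.drop i).take_prefix 3).isInfix.trans (W.drop_suffix i).isInfix

lemma win3_length (W : List ℕ) (i : ℕ) (h : i + 3 ≤ W.length) : (win3 W i).length = 3 := by
  simp [win3]; omega

lemma occ_of_infix (W u : List ℕ) (h : u <:+: W) :
    ∃ i, i + u.length ≤ W.length ∧ u = (W.drop i).take u.length := by
  obtain ⟨s, t, rfl⟩ := h
  refine ⟨s.length, by simp, ?_⟩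
  rw [List.append_assoc, List.drop_left, List.take_left]

lemma take_succ_getD (l : List ℕ) (n : ℕ) (h : n < l.length) :
    l.take (n+1) = l.take n ++ [l.getD n 0] := by
  rw [List.take_succ, List.getElem?_eq_getElem h, List.getD_eq_getElem l 0 h]; rfl

lemma drop_getD (l : List ℕ) (i j : ℕ) (h : i + j < l.length) :
    (l.drop i).getD j 0 = l.getD (i+j) 0 := by
  rw [List.getD_eq_getElem _ 0 (by simp; omega), List.getD_eq_getElem _ 0 h]
  simp

lemma win3_eq (W : List ℕ) (i : ℕ) (h : i + 3 ≤ W.length) :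
    win3 W i = (W.drop i).take 2 ++ [W.getD (i+2) 0] := by
  have h2 : (2:ℕ) < (W.drop i).length := by simp; omega
  rw [win3, show (3:ℕ) = 2 + 1 from rfl, take_succ_getD _ _ h2, drop_getD _ _ _ (by omega)]

lemma win3_cons (W : List ℕ) (i : ℕ) (h : i < W.length) :
    win3 W i = W.getD i 0 :: (W.drop (i+1)).take 2 := by
  rw [win3, List.drop_eq_getElem_cons h, List.getD_eq_getElem _ 0 h]; rfl

section Abstract
variable (W : List ℕ)
  (hinj : ∀ i j, i + 3 ≤ W.length → j + 3 ≤ W.length → win3 W i = win3 W j → i = j)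

include hinj in
lemma rm_short (x : List ℕ) (hx : RightMaximal W x) : x.length ≤ 2 := by
  by_contra hlen
  push_neg at hlen
  obtain ⟨a, b, hab, ha, hb⟩ := hx
  obtain ⟨i, hi, hiu⟩ := occ_of_infix W _ ha
  obtain ⟨j, hj, hju⟩ := occ_of_infix W _ hb
  rw [show (x ++ [a]).length = x.length + 1 by simp] at hi hiu
  rw [show (x ++ [b]).length = x.length + 1 by simp] at hj hju
  have hij : i = j := by
    apply hinj i j (by omega) (by omega)
    have h1 : win3 W i = (x ++ [a]).take 3 := by
      rw [hiu, win3, List.take_take]; congr 1; omega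
    have h2 : win3 W j = (x ++ [b]).take 3 := by
      rw [hju, win3, List.take_take]; congr 1; omega
    rw [h1, h2, List.take_append_of_le_length (by omega), List.take_append_of_le_length (by omega)]
  subst hij
  rw [← hju] at hiu
  exact hab (by simpa using List.append_cancel_left hiu)

include hinj in
lemma ext_short (y : List ℕ) (hy : y ∈ ExtSet W) : 1 ≤ y.length ∧ y.length ≤ 3 := by
  obtain ⟨x, a, hrm, rfl, _⟩ := hy
  have := rm_short W hinj x hrm
  simp; omega
end Abstract

lemma take_one_getD (l : List ℕ) (h : 0 < l.length) : l.take 1 = [l.getD 0 0] := by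
  have := take_succ_getD l 0 h
  simpa using this

section Abstract2
variable (W : List ℕ) (h3 : 3 ≤ W.length)
  (hinj : ∀ i j, i + 3 ≤ W.length → j + 3 ≤ W.length → win3 W i = win3 W j → i = j)
  (hbr : ∀ i, i + 3 ≤ W.length → RightMaximal W ((W.drop i).take 2))
  (h1 : ∀ p, p + 1 ≤ W.length → ∃ j, 2 ≤ j ∧ j + 1 ≤ W.length ∧ W.getD j 0 = W.getD p 0)
  (h2 : ∀ p, p + 2 ≤ W.length → ∃ j, 1 ≤ j ∧ j + 2 ≤ W.length ∧ (W.drop j).take 2 = (W.drop p).take 2)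

include hbr in
lemma win3_ext (i : ℕ) (hi : i + 3 ≤ W.length) : win3 W i ∈ ExtSet W :=
  ⟨(W.drop i).take 2, W.getD (i+2) 0, hbr i hi, win3_eq W i hi, win3_infix W i⟩

include h3 hinj hbr h1 h2 in
lemma superMax_eq : SuperMax W = win3 W '' ↑(Finset.range (W.length - 2)) := by
  ext y
  simp only [SuperMax, Set.mem_setOf_eq, Set.mem_image, Finset.coe_range, Set.mem_Iio]
  constructor
  · rintro ⟨hy, hsm⟩
    obtain ⟨hy1, hy3⟩ := ext_short W hinj y hy
    obtain ⟨x0, a0, -, heq0, hinf⟩ := id hy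
    obtain hl | hl | hl : y.length = 1 ∨ y.length = 2 ∨ y.length = 3 := by omega
    · -- length 1
      exfalso
      obtain ⟨i, hi, hiu⟩ := occ_of_infix W y hinf
      rw [hl] at hi hiu
      obtain ⟨j, hj2, hj1, hjeq⟩ := h1 i hi
      have hz3 : (j - 2) + 3 ≤ W.length := by omega
      have hz := win3_ext W hbr (j-2) hz3
      have hzy : y <:+ win3 W (j-2) := by
        rw [win3_eq W _ hz3, show j - 2 + 2 = j by omega, hjeq]
        rw [hiu, take_one_getD _ (by simp; omega), drop_getD _ _ _ (by omega)]
        simp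
      have heq := hsm _ hz hzy
      have hwl := win3_length W (j-2) hz3
      rw [← heq, hl] at hwl
      omega
    · -- length 2
      exfalso
      obtain ⟨i, hi, hiu⟩ := occ_of_infix W y hinf
      rw [hl] at hi hiu
      obtain ⟨j, hj1, hj2, hjeq⟩ := h2 i hi
      have hz3 : (j - 1) + 3 ≤ W.length := by omega
      have hz := win3_ext W hbr (j-1) hz3
      have hzy : y <:+ win3 W (j-1) := by
        rw [win3_cons W _ (by omega), show j - 1 + 1 = j by omega, hjeq, ← hiu]
        exact List.suffix_cons _ _
      have heq := hsm _ hz hzy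
      have hwl := win3_length W (j-1) hz3
      rw [← heq, hl] at hwl
      omega
    · -- length 3
      obtain ⟨i, hi, hiu⟩ := occ_of_infix W y hinf
      rw [hl] at hi hiu
      exact ⟨i, by omega, hiu.symm⟩
  · rintro ⟨i, hi, rfl⟩
    have hi3 : i + 3 ≤ W.length := by omega
    refine ⟨win3_ext W hbr i hi3, fun z hz hsz => ?_⟩
    have hz3 := (ext_short W hinj z hz).2
    refine hsz.eq_of_length ?_
    have := hsz.length_le
    have := win3_length W i hi3
    omega

include h3 hinj hbr h1 h2 in
lemma chi_eq_abstract : chi W = W.length - 2 := by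
  rw [chi, superMax_eq W h3 hinj hbr h1 h2,
    Set.ncard_image_of_injOn (fun a ha b hb hab => by
      simp only [Finset.coe_range, Set.mem_Iio] at ha hb
      exact hinj a b (by omega) (by omega) hab),
    Set.ncard_coe_finset, Finset.card_range]

end Abstract2

lemma flatMap_const_length (g : ℕ → List ℕ) (L : ℕ) : ∀ m, (∀ b, b < m → (g b).length = L) →
    ((List.range m).flatMap g).length = m * L
  | 0, _ => by simp
  | (k+1), hg => by
    simp only [List.range_succ, List.flatMap_append, List.length_append,
      flatMap_const_length g L k (fun b hb => hg b (by omega)), List.flatMap_cons,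
      List.flatMap_nil, List.append_nil, hg k (by omega)]
    ring

lemma flatMap_const_getD (g : ℕ → List ℕ) (L : ℕ) : ∀ m a r, (∀ b, b < m → (g b).length = L) →
    a < m → r < L → ((List.range m).flatMap g).getD (a*L+r) 0 = (g a).getD r 0
  | 0, a, r, _, ha, _ => by omega
  | (k+1), a, r, hg, ha, hr => by
    simp only [List.range_succ, List.flatMap_append, List.flatMap_cons, List.flatMap_nil,
      List.append_nil]
    rcases Nat.lt_or_ge a k with h | h
    · rw [List.getD_append _ _ _ _ (by
        rw [flatMap_const_length g L k (fun b hb => hg b (by omega))]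
        calc a*L+r < (a+1)*L := by nlinarith
        _ ≤ k*L := Nat.mul_le_mul_right _ (by omega))]
      exact flatMap_const_getD g L k a r (fun b hb => hg b (by omega)) h hr
    · have ha' : a = k := by omega
      rw [List.getD_append_right _ _ _ _ (by
        rw [flatMap_const_length g L k (fun b hb => hg b (by omega))]; nlinarith),
        flatMap_const_length g L k (fun b hb => hg b (by omega)), ha',
        show k*L+r - k*L = r by omega]

lemma block_length (σ a : ℕ) : (block σ a).length = 2*σ+2 := by
  rw [block, List.length_append, flatMap_const_length (fun b => [a, b]) 2 σ (fun b _ => rfl)]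
  simp; ring

lemma block_getD_even (σ a b : ℕ) (hb : b ≤ σ) : (block σ a).getD (2*b) 0 = a := by
  rcases Nat.lt_or_ge b σ with h | h
  · rw [block, List.getD_append _ _ _ _ (by
      rw [flatMap_const_length (fun b => [a, b]) 2 σ (fun b _ => rfl)]; omega),
      show 2*b = b*2+0 by ring,
      flatMap_const_getD (fun b => [a, b]) 2 σ b 0 (fun b _ => rfl) h (by omega)]
    rfl
  · rw [block, List.getD_append_right _ _ _ _ (by
      rw [flatMap_const_length (fun b => [a, b]) 2 σ (fun b _ => rfl)]; omega),
      flatMap_const_length (fun b => [a, b]) 2 σ (fun b _ => rfl),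
      show 2*b - σ*2 = 0 by omega]
    rfl

lemma block_getD_odd (σ a b : ℕ) (hb : b < σ) : (block σ a).getD (2*b+1) 0 = b := by
  rw [block, List.getD_append _ _ _ _ (by
    rw [flatMap_const_length (fun b => [a, b]) 2 σ (fun b _ => rfl)]; omega),
    show 2*b+1 = b*2+1 by ring,
    flatMap_const_getD (fun b => [a, b]) 2 σ b 1 (fun b _ => rfl) hb (by omega)]
  rfl

lemma block_getD_last (σ a : ℕ) : (block σ a).getD (2*σ+1) 0 = σ - 1 := by
  rw [block, List.getD_append_right _ _ _ _ (by
    rw [flatMap_const_length (fun b => [a, b]) 2 σ (fun b _ => rfl)]; omega),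
    flatMap_const_length (fun b => [a, b]) 2 σ (fun b _ => rfl),
    show 2*σ+1 - σ*2 = 1 by omega]
  rfl

lemma Sstr_length (σ : ℕ) (hσ : 2 ≤ σ) : (Sstr σ).length = 2*σ^2 := by
  rw [Sstr, List.length_append,
    flatMap_const_length (fun a => block σ a) (2*σ+2) (σ-1) (fun b _ => block_length σ b)]
  obtain ⟨τ, rfl⟩ : ∃ τ, σ = τ+2 := ⟨σ-2, by omega⟩
  rw [show τ+2-1 = τ+1 by omega]
  simp only [List.length_cons, List.length_nil]
  ring

lemma Sstr_getD_block (σ a r : ℕ) (ha : a < σ-1) (hr : r < 2*σ+2) :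
    (Sstr σ).getD (a*(2*σ+2)+r) 0 = (block σ a).getD r 0 := by
  rw [Sstr, List.getD_append _ _ _ _ (by
    rw [flatMap_const_length (fun a => block σ a) (2*σ+2) (σ-1) (fun b _ => block_length σ b)]
    calc a*(2*σ+2)+r < (a+1)*(2*σ+2) := by nlinarith
    _ ≤ (σ-1)*(2*σ+2) := Nat.mul_le_mul_right _ (by omega)),
    flatMap_const_getD (fun a => block σ a) (2*σ+2) (σ-1) a r
      (fun b _ => block_length σ b) ha hr]

lemma Sstr_getD_pair (σ r : ℕ) (hr : r < 2) :
    (Sstr σ).getD ((σ-1)*(2*σ+2)+r) 0 = σ - 1 := by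
  rw [Sstr, List.getD_append_right _ _ _ _ (by
    rw [flatMap_const_length (fun a => block σ a) (2*σ+2) (σ-1) (fun b _ => block_length σ b)]
    omega),
    flatMap_const_length (fun a => block σ a) (2*σ+2) (σ-1) (fun b _ => block_length σ b),
    Nat.add_sub_cancel_left]
  rcases (by omega : r = 0 ∨ r = 1) with rfl | rfl <;> rfl

lemma cyc3_s10 (S : List ℕ) (i : ℕ) : cyc S i 3 =
    [S.getD (i % S.length) 0, S.getD ((i+1) % S.length) 0, S.getD ((i+2) % S.length) 0] := by
  simp [cyc, List.range_succ]

lemma cyc3_nowrap (S : List ℕ) (i : ℕ) (h : i + 2 < S.length) : cyc S i 3 =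
    [S.getD i 0, S.getD (i+1) 0, S.getD (i+2) 0] := by
  rw [cyc3_s10, Nat.mod_eq_of_lt (by omega), Nat.mod_eq_of_lt (by omega),
    Nat.mod_eq_of_lt (by omega)]

lemma Sval_even (τ i a b : ℕ) (hi : i = a*(2*τ+6)+2*b) (ha : a ≤ τ) (hb : b ≤ τ+2) :
    (Sstr (τ+2)).getD i 0 = a := by
  subst hi
  rw [show a*(2*τ+6)+2*b = a*(2*(τ+2)+2)+2*b by ring]
  rw [Sstr_getD_block (τ+2) a (2*b) (by omega) (by omega)]
  exact block_getD_even (τ+2) a b (by omega)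

lemma Sval_odd (τ i a b : ℕ) (hi : i = a*(2*τ+6)+(2*b+1)) (ha : a ≤ τ) (hb : b ≤ τ+1) :
    (Sstr (τ+2)).getD i 0 = b := by
  subst hi
  rw [show a*(2*τ+6)+(2*b+1) = a*(2*(τ+2)+2)+(2*b+1) by ring]
  rw [Sstr_getD_block (τ+2) a (2*b+1) (by omega) (by omega)]
  exact block_getD_odd (τ+2) a b (by omega)

lemma Sval_last (τ i a : ℕ) (hi : i = a*(2*τ+6)+(2*τ+5)) (ha : a ≤ τ) :
    (Sstr (τ+2)).getD i 0 = τ+1 := by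
  subst hi
  rw [show a*(2*τ+6)+(2*τ+5) = a*(2*(τ+2)+2)+(2*(τ+2)+1) by ring]
  rw [Sstr_getD_block (τ+2) a (2*(τ+2)+1) (by omega) (by omega)]
  rw [block_getD_last (τ+2) a]
  omega

lemma Sval_pair (τ i r : ℕ) (hi : i = (τ+1)*(2*τ+6)+r) (hr : r < 2) :
    (Sstr (τ+2)).getD i 0 = τ+1 := by
  subst hi
  rw [show (τ+1)*(2*τ+6)+r = (τ+2-1)*(2*(τ+2)+2)+r by rw [show τ+2-1 = τ+1 by omega]; ring]
  rw [Sstr_getD_pair (τ+2) r hr]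
  omega

lemma M1 (σ : ℕ) (hσ : 2 ≤ σ) (x y : ℕ) (hx : x < σ) (hy : y < σ) :
    (∃ p, p < 2*σ^2 ∧ cyc (Sstr σ) p 3 = [x, y, x]) ∧
    (∃ p, p < 2*σ^2 ∧ cyc (Sstr σ) p 3 = [x, y, (x+1) % σ]) := by
  obtain ⟨τ, rfl⟩ : ∃ τ, σ = τ+2 := ⟨σ-2, by omega⟩
  have hlen := Sstr_length (τ+2) (by omega)
  have hq : τ*(2*τ+6) + (2*τ+8) = 2*(τ+2)^2 := by ring
  constructor
  · -- [x, y, x]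
    rcases Nat.lt_or_ge x (τ+1) with hx1 | hx1
    · -- x ≤ τ
      have hkx := Nat.mul_le_mul_right (2*τ+6) (show x ≤ τ by omega)
      refine ⟨x*(2*τ+6)+2*y, by omega, ?_⟩
      rw [cyc3_nowrap _ _ (by rw [hlen]; omega),
        Sval_even τ _ x y rfl (by omega) (by omega),
        Sval_odd τ _ x y (by ring) (by omega) (by omega),
        Sval_even τ _ x (y+1) (by ring) (by omega) (by omega)]
    · -- x = τ+1
      have hx' : x = τ+1 := by omega
      subst hx'
      rcases Nat.lt_or_ge y (τ+1) with hy1 | hy1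
      · -- y ≤ τ
        have hky := Nat.mul_le_mul_right (2*τ+6) (show y ≤ τ by omega)
        refine ⟨y*(2*τ+6)+(2*τ+3), by omega, ?_⟩
        rw [cyc3_nowrap _ _ (by rw [hlen]; omega),
          Sval_odd τ _ y (τ+1) (by ring) (by omega) (by omega),
          Sval_even τ _ y (τ+2) (by ring) (by omega) (by omega),
          Sval_last τ _ y (by ring) (by omega)]
      · -- y = τ+1
        have hy' : y = τ+1 := by omega
        subst hy'
        refine ⟨τ*(2*τ+6)+(2*τ+5), by omega, ?_⟩
        rw [cyc3_nowrap _ _ (by rw [hlen]; omega),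
          Sval_last τ _ τ rfl (by omega),
          Sval_pair τ _ 0 (by ring) (by omega),
          Sval_pair τ _ 1 (by ring) (by omega)]
  · -- [x, y, (x+1) % (τ+2)]
    rcases Nat.lt_or_ge x (τ+1) with hx1 | hx1
    · -- x ≤ τ : (x+1) % (τ+2) = x+1
      rw [show (x+1) % (τ+2) = x+1 from Nat.mod_eq_of_lt (by omega)]
      have hkx := Nat.mul_le_mul_right (2*τ+6) (show x ≤ τ by omega)
      rcases Nat.lt_or_ge y (τ+1) with hy1 | hy1
      · -- y ≤ τ
        have hky := Nat.mul_le_mul_right (2*τ+6) (show y ≤ τ by omega)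
        refine ⟨y*(2*τ+6)+(2*x+1), by omega, ?_⟩
        rw [cyc3_nowrap _ _ (by rw [hlen]; omega),
          Sval_odd τ _ y x (by ring) (by omega) (by omega),
          Sval_even τ _ y (x+1) (by ring) (by omega) (by omega),
          Sval_odd τ _ y (x+1) (by ring) (by omega) (by omega)]
      · -- y = τ+1
        have hy' : y = τ+1 := by omega
        subst hy'
        have h2x : (x+1)*(2*τ+6) = x*(2*τ+6)+(2*τ+6) := by ring
        have hkx1 := Nat.mul_le_mul_right (2*τ+6) (show x+1 ≤ τ+1 by omega)
        have h2t : (τ+1)*(2*τ+6) = τ*(2*τ+6)+(2*τ+6) := by ring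
        rcases Nat.lt_or_ge x τ with hx2 | hx2
        · refine ⟨x*(2*τ+6)+(2*τ+4), by omega, ?_⟩
          rw [cyc3_nowrap _ _ (by rw [hlen]; omega),
            Sval_even τ _ x (τ+2) (by ring) (by omega) (by omega),
            Sval_last τ _ x (by ring) (by omega),
            Sval_even τ _ (x+1) 0 (by ring) (by omega) (by omega)]
        · have hx' : x = τ := by omega
          subst hx'
          refine ⟨x*(2*x+6)+(2*x+4), by omega, ?_⟩
          rw [cyc3_nowrap _ _ (by rw [hlen]; omega),
            Sval_even x _ x (x+2) (by ring) (by omega) (by omega),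
            Sval_last x _ x (by ring) (by omega),
            Sval_pair x _ 0 (by rw [h2t]; ring) (by omega)]
    · -- x = τ+1 : (x+1) % (τ+2) = 0
      have hx' : x = τ+1 := by omega
      subst hx'
      rw [show (τ+1+1) % (τ+2) = 0 by
        rw [show τ+1+1 = τ+2 by omega]; exact Nat.mod_self _]
      have h2t : (τ+1)*(2*τ+6) = τ*(2*τ+6)+(2*τ+6) := by ring
      rcases Nat.lt_or_ge y (τ+1) with hy1 | hy1
      · rcases Nat.eq_zero_or_pos y with hy0 | hy0
        · -- y = 0 : p = n-1
          subst hy0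
          refine ⟨(τ+1)*(2*τ+6)+1, by omega, ?_⟩
          rw [cyc3_s10, hlen,
            Nat.mod_eq_of_lt (show (τ+1)*(2*τ+6)+1 < 2*(τ+2)^2 by omega),
            show ((τ+1)*(2*τ+6)+1+1) % (2*(τ+2)^2) = 0 by
              rw [show (τ+1)*(2*τ+6)+1+1 = 2*(τ+2)^2 by omega]; exact Nat.mod_self _,
            show ((τ+1)*(2*τ+6)+1+2) % (2*(τ+2)^2) = 1 by
              rw [show (τ+1)*(2*τ+6)+1+2 = 2*(τ+2)^2+1 by omega, Nat.add_mod_left]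
              exact Nat.mod_eq_of_lt (by omega),
            Sval_pair τ _ 1 rfl (by omega),
            Sval_even τ _ 0 0 (by ring) (by omega) (by omega),
            Sval_odd τ _ 0 0 (by ring) (by omega) (by omega)]
        · -- 1 ≤ y ≤ τ
          obtain ⟨y', rfl⟩ : ∃ y', y = y'+1 := ⟨y-1, by omega⟩
          have h2y : (y'+1)*(2*τ+6) = y'*(2*τ+6)+(2*τ+6) := by ring
          have hky := Nat.mul_le_mul_right (2*τ+6) (show y'+1 ≤ τ by omega)
          refine ⟨y'*(2*τ+6)+(2*τ+5), by omega, ?_⟩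
          rw [cyc3_nowrap _ _ (by rw [hlen]; omega),
            Sval_last τ _ y' rfl (by omega),
            Sval_even τ _ (y'+1) 0 (by rw [h2y]; ring) (by omega) (by omega),
            Sval_odd τ _ (y'+1) 0 (by rw [h2y]; ring) (by omega) (by omega)]
      · -- y = τ+1 : p = n-2
        have hy' : y = τ+1 := by omega
        subst hy'
        refine ⟨(τ+1)*(2*τ+6), by omega, ?_⟩
        rw [cyc3_s10, hlen,
          Nat.mod_eq_of_lt (show (τ+1)*(2*τ+6) < 2*(τ+2)^2 by omega),
          Nat.mod_eq_of_lt (show (τ+1)*(2*τ+6)+1 < 2*(τ+2)^2 by omega),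
          show ((τ+1)*(2*τ+6)+2) % (2*(τ+2)^2) = 0 by
            rw [show (τ+1)*(2*τ+6)+2 = 2*(τ+2)^2 by omega]; exact Nat.mod_self _,
          Sval_pair τ _ 0 (by ring) (by omega),
          Sval_pair τ _ 1 rfl (by omega),
          Sval_even τ _ 0 0 (by ring) (by omega) (by omega)]

lemma ne_succ_mod (σ z : ℕ) (hσ : 2 ≤ σ) (hz : z < σ) : z ≠ (z+1) % σ := by
  rcases Nat.lt_or_ge (z+1) σ with h | h
  · rw [Nat.mod_eq_of_lt h]; omega
  · rw [show z+1 = σ by omega, Nat.mod_self]; omega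

lemma M23 (σ : ℕ) (hσ : 2 ≤ σ) :
    (∀ i j, i < 2*σ^2 → j < 2*σ^2 → cyc (Sstr σ) i 3 = cyc (Sstr σ) j 3 → i = j) ∧
    (∀ i, i < 2*σ^2 → ∃ x y, x < σ ∧ y < σ ∧
      (cyc (Sstr σ) i 3 = [x,y,x] ∨ cyc (Sstr σ) i 3 = [x,y,(x+1)%σ])) := by
  set F : Fin σ × Fin σ × Bool → List ℕ :=
    fun v => [v.1.1, v.2.1.1, if v.2.2 then v.1.1 else (v.1.1+1)%σ] with hFdef
  have hF : Function.Injective F := by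
    rintro ⟨x, y, b⟩ ⟨x', y', b'⟩ h
    simp only [hFdef, List.cons.injEq, and_true] at h
    obtain ⟨h1, h2, h3⟩ := h
    have hxx : x = x' := Fin.ext h1
    have hyy : y = y' := Fin.ext h2
    have hbb : b = b' := by
      subst hxx
      cases b <;> cases b' <;> simp only [if_true, if_false] at h3 <;> first
        | rfl
        | exact absurd h3.symm (ne_succ_mod σ x.1 hσ x.2)
        | exact absurd h3 (ne_succ_mod σ x.1 hσ x.2)
    rw [hxx, hyy, hbb]
  have key : ∀ v, ∃ p : Fin (2*σ^2), cyc (Sstr σ) p.1 3 = F v := by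
    rintro ⟨x, y, b⟩
    obtain ⟨h1, h2⟩ := M1 σ hσ x.1 y.1 x.2 y.2
    cases b
    · obtain ⟨p, hp, he⟩ := h2; exact ⟨⟨p, hp⟩, by simpa [hFdef] using he⟩
    · obtain ⟨p, hp, he⟩ := h1; exact ⟨⟨p, hp⟩, by simpa [hFdef] using he⟩
  choose G hG using key
  have hGinj : Function.Injective G := by
    intro v v' h
    exact hF (by rw [← hG v, ← hG v', h])
  have hcard : Fintype.card (Fin σ × Fin σ × Bool) = Fintype.card (Fin (2*σ^2)) := by
    simp [Fintype.card_prod]; ring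
  have hGsurj : Function.Surjective G :=
    ((Fintype.bijective_iff_injective_and_card G).2 ⟨hGinj, hcard⟩).2
  constructor
  · intro i j hi hj he
    obtain ⟨v, hv⟩ := hGsurj ⟨i, hi⟩
    obtain ⟨v', hv'⟩ := hGsurj ⟨j, hj⟩
    have e1 : cyc (Sstr σ) i 3 = F v := by rw [← hG v, hv]
    have e2 : cyc (Sstr σ) j 3 = F v' := by rw [← hG v', hv']
    have : v = v' := hF (by rw [← e1, ← e2, he])
    have := congrArg (fun p : Fin (2*σ^2) => p.1) (hv ▸ hv' ▸ congrArg G this)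
    simpa using this
  · intro i hi
    obtain ⟨⟨x, y, b⟩, hv⟩ := hGsurj ⟨i, hi⟩
    have e1 : cyc (Sstr σ) i 3 = F (x, y, b) := by rw [← hG _, hv]
    refine ⟨x.1, y.1, x.2, y.2, ?_⟩
    cases b
    · right; simpa [hFdef] using e1
    · left; simpa [hFdef] using e1


lemma rot_length (S : List ℕ) (k : ℕ) : (rot S k).length = S.length := by
  simp [rot]; omega

lemma rot_getD (S : List ℕ) (k j : ℕ) (hk : k < S.length) (hj : j < S.length) :
    (rot S k).getD j 0 = S.getD ((j+k) % S.length) 0 := by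
  rw [rot]
  rcases Nat.lt_or_ge j (S.length - k) with h | h
  · rw [List.getD_append _ _ _ _ (by rw [List.length_drop]; omega),
      Nat.mod_eq_of_lt (by omega), drop_getD S k j (by omega)]
    congr 1; omega
  · rw [List.getD_append_right _ _ _ _ (by rw [List.length_drop]; omega), List.length_drop,
      show (j+k) % S.length = j+k - S.length by
        rw [Nat.mod_eq_sub_mod (by omega)]; exact Nat.mod_eq_of_lt (by omega)]
    rw [List.getD_eq_getElem _ _ (by rw [List.length_take]; omega),
      List.getElem_take, ← List.getD_eq_getElem S 0 (by omega)]
    congr 1; omega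

lemma cyc_rot (S : List ℕ) (k i m : ℕ) (hk : k < S.length) :
    cyc (rot S k) i m = cyc S ((i+k) % S.length) m := by
  have hn : 0 < S.length := by omega
  unfold cyc
  rw [rot_length]
  refine List.map_congr_left ?_
  intro j _
  rw [rot_getD S k _ hk (Nat.mod_lt _ hn), Nat.mod_add_mod, Nat.mod_add_mod,
    show i + j + k = i + k + j by ring]

lemma drop_take_two (l : List ℕ) (i : ℕ) (h : i + 2 ≤ l.length) :
    (l.drop i).take 2 = [l.getD i 0, l.getD (i+1) 0] := by
  rw [show (2:ℕ) = 1+1 from rfl, take_succ_getD _ 1 (by simp; omega),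
    take_one_getD _ (by simp; omega),
    drop_getD l i 0 (by omega), drop_getD l i 1 (by omega)]
  norm_num

lemma drop_take_three (l : List ℕ) (i : ℕ) (h : i + 3 ≤ l.length) :
    (l.drop i).take 3 = [l.getD i 0, l.getD (i+1) 0, l.getD (i+2) 0] := by
  rw [show (3:ℕ) = 2+1 from rfl, take_succ_getD _ 2 (by simp; omega),
    drop_take_two l i (by omega), drop_getD l i 2 (by omega)]
  norm_num

/-- for any linearization t of any rotation of S_σ, the size
χ(t) of the smallest suffixient set of t$ equals 2σ² + 1. -/
theorem stmt10 (σ : ℕ) (hσ : 2 ≤ σ) (w : List ℕ)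
    (hw : ∃ i, w = rot (Sstr σ) i) :
    chi (term (w ++ w.take 2)) = 2 * σ ^ 2 + 1 := by
  obtain ⟨k0, hk0⟩ := hw
  have hSlen : (Sstr σ).length = 2*σ^2 := Sstr_length σ hσ
  have hn8 : 8 ≤ 2*σ^2 := by nlinarith
  obtain ⟨k, hkn, hwk⟩ : ∃ k, k < 2*σ^2 ∧ w = rot (Sstr σ) k := by
    rcases Nat.lt_or_ge k0 (2*σ^2) with h | h
    · exact ⟨k0, h, hk0⟩
    · refine ⟨0, by omega, ?_⟩
      rw [hk0, rot, rot, List.drop_eq_nil_of_le (by omega),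
        List.take_of_length_le (by omega)]
      simp
  have hwlen : w.length = 2*σ^2 := by rw [hwk, rot_length, hSlen]
  obtain ⟨SM2, SM3⟩ := M23 σ hσ
  have hwcyc : ∀ i, cyc w i 3 = cyc (Sstr σ) ((i+k) % (2*σ^2)) 3 := by
    intro i
    rw [hwk, cyc_rot (Sstr σ) k i 3 (by omega), hSlen]
  have hwinj : ∀ i j, i < 2*σ^2 → j < 2*σ^2 → cyc w i 3 = cyc w j 3 → i = j := by
    intro i j hi hj he
    rw [hwcyc i, hwcyc j] at he
    have h1 := SM2 _ _ (Nat.mod_lt _ (by omega)) (Nat.mod_lt _ (by omega)) he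
    have h2 : i ≡ j [MOD 2*σ^2] := Nat.ModEq.add_right_cancel' k h1
    rwa [Nat.ModEq, Nat.mod_eq_of_lt hi, Nat.mod_eq_of_lt hj] at h2
  have hwM1 : ∀ x y, x < σ → y < σ →
      (∃ p, p < 2*σ^2 ∧ cyc w p 3 = [x,y,x]) ∧
      (∃ p, p < 2*σ^2 ∧ cyc w p 3 = [x,y,(x+1)%σ]) := by
    intro x y hx hy
    obtain ⟨⟨p1, hp1, he1⟩, p2, hp2, he2⟩ := M1 σ hσ x y hx hy
    have key : ∀ p, p < 2*σ^2 → ((p + (2*σ^2 - k)) % (2*σ^2) + k) % (2*σ^2) = p := by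
      intro p hp
      rw [Nat.mod_add_mod, show p + (2*σ^2 - k) + k = p + 2*σ^2 by omega,
        Nat.add_mod_right]
      exact Nat.mod_eq_of_lt hp
    constructor
    · exact ⟨(p1 + (2*σ^2 - k)) % (2*σ^2), Nat.mod_lt _ (by omega),
        by rw [hwcyc, key p1 hp1, he1]⟩
    · exact ⟨(p2 + (2*σ^2 - k)) % (2*σ^2), Nat.mod_lt _ (by omega),
        by rw [hwcyc, key p2 hp2, he2]⟩
  have hwM3 : ∀ i, i < 2*σ^2 → ∃ x y, x < σ ∧ y < σ ∧
      (cyc w i 3 = [x,y,x] ∨ cyc w i 3 = [x,y,(x+1)%σ]) := by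
    intro i hi
    rw [hwcyc i]
    exact SM3 _ (Nat.mod_lt _ (by omega))
  -- the terminated string W
  set W := term (w ++ w.take 2) with hWdef
  have hlen2 : ((w ++ w.take 2).map (· + 1)).length = 2*σ^2 + 2 := by
    simp [hwlen]; omega
  have hWlen : W.length = 2*σ^2 + 3 := by
    rw [hWdef, term, List.length_append, hlen2]; rfl
  have hWget : ∀ j, j ≤ 2*σ^2 + 1 → W.getD j 0 = w.getD (j % (2*σ^2)) 0 + 1 := by
    intro j hj
    rw [hWdef, term, List.getD_append _ _ _ _ (by rw [hlen2]; omega),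
      List.getD_eq_getElem _ _ (by rw [hlen2]; omega), List.getElem_map]
    have he : (w ++ w.take 2)[j]'(by simp [hwlen]; omega) = w.getD (j % (2*σ^2)) 0 := by
      rcases Nat.lt_or_ge j (2*σ^2) with h | h
      · rw [List.getElem_append_left (by rw [hwlen]; omega),
          Nat.mod_eq_of_lt h, List.getD_eq_getElem _ _ (by omega)]
      · rw [List.getElem_append_right (by rw [hwlen]; omega), List.getElem_take,
          show j % (2*σ^2) = j - 2*σ^2 by
            rw [Nat.mod_eq_sub_mod (by omega)]; exact Nat.mod_eq_of_lt (by omega),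
          List.getD_eq_getElem _ _ (by omega)]
        congr 1
        rw [hwlen]
    rw [he]
  have hWlast : W.getD (2*σ^2+2) 0 = 0 := by
    rw [hWdef, term, List.getD_append_right _ _ _ _ (by rw [hlen2]), hlen2,
      Nat.sub_self]
    rfl
  have hwin : ∀ i, i < 2*σ^2 → win3 W i =
      [w.getD (i % (2*σ^2)) 0 + 1, w.getD ((i+1) % (2*σ^2)) 0 + 1,
       w.getD ((i+2) % (2*σ^2)) 0 + 1] := by
    intro i hi
    rw [win3, drop_take_three W i (by rw [hWlen]; omega),
      hWget i (by omega), hWget (i+1) (by omega), hWget (i+2) (by omega)]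
  have hwinn : win3 W (2*σ^2) = [w.getD 0 0 + 1, w.getD 1 0 + 1, 0] := by
    rw [win3, drop_take_three W _ (by rw [hWlen]),
      hWget _ (by omega), hWget _ (by omega), hWlast, Nat.mod_self,
      show (2*σ^2+1) % (2*σ^2) = 1 by
        rw [Nat.add_mod_left]; exact Nat.mod_eq_of_lt (by omega)]
  -- componentwise view of cyclic 3-grams
  have hcy : ∀ i, cyc w i 3 = [w.getD (i % (2*σ^2)) 0, w.getD ((i+1) % (2*σ^2)) 0,
      w.getD ((i+2) % (2*σ^2)) 0] := by
    intro i
    rw [cyc3_s10, hwlen]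
  -- abstract hypotheses
  have hinjW : ∀ i j, i + 3 ≤ W.length → j + 3 ≤ W.length →
      win3 W i = win3 W j → i = j := by
    intro i j hi hj he
    rw [hWlen] at hi hj
    rcases Nat.lt_or_ge i (2*σ^2) with h1 | h1 <;> rcases Nat.lt_or_ge j (2*σ^2) with h2 | h2
    · rw [hwin i h1, hwin j h2] at he
      simp only [List.cons.injEq, and_true] at he
      obtain ⟨e1, e2, e3⟩ := he
      apply hwinj i j h1 h2
      rw [hcy i, hcy j]
      simp only [List.cons.injEq, and_true]
      omega
    · have hj' : j = 2*σ^2 := by omega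
      rw [hwin i h1, hj', hwinn] at he
      simp only [List.cons.injEq, and_true] at he
      omega
    · have hi' : i = 2*σ^2 := by omega
      rw [hwin j h2, hi', hwinn] at he
      simp only [List.cons.injEq, and_true] at he
      omega
    · omega
  have hbrW : ∀ i, i + 3 ≤ W.length → RightMaximal W ((W.drop i).take 2) := by
    intro i hi
    rw [hWlen] at hi
    have h2g : (W.drop i).take 2 =
        [w.getD (i % (2*σ^2)) 0 + 1, w.getD ((i+1) % (2*σ^2)) 0 + 1] := by
      rw [drop_take_two W i (by rw [hWlen]; omega), hWget i (by omega),
        hWget (i+1) (by omega)]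
    have hmod : i % (2*σ^2) < 2*σ^2 := Nat.mod_lt _ (by omega)
    obtain ⟨x, y, hx, hy, hcase⟩ := hwM3 (i % (2*σ^2)) hmod
    have hxy : w.getD (i % (2*σ^2)) 0 = x ∧ w.getD ((i+1) % (2*σ^2)) 0 = y := by
      have e2 : (i % (2*σ^2) + 1) % (2*σ^2) = (i+1) % (2*σ^2) := Nat.mod_add_mod i _ 1
      rcases hcase with hc | hc <;>
      · rw [hcy] at hc
        simp only [List.cons.injEq, and_true] at hc
        obtain ⟨c1, c2, -⟩ := hc
        rw [Nat.mod_mod_of_dvd i dvd_rfl] at c1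
        rw [Nat.mod_add_mod] at c2
        exact ⟨c1, c2⟩
    obtain ⟨⟨p1, hp1, he1⟩, p2, hp2, he2⟩ := hwM1 x y hx hy
    have hw1 : win3 W p1 = [x+1, y+1, x+1] := by
      rw [hwin p1 hp1]
      rw [hcy] at he1
      simp only [List.cons.injEq, and_true] at he1
      obtain ⟨a1, a2, a3⟩ := he1
      rw [a1, a2, a3]
    have hw2 : win3 W p2 = [x+1, y+1, (x+1)%σ+1] := by
      rw [hwin p2 hp2]
      rw [hcy] at he2
      simp only [List.cons.injEq, and_true] at he2
      obtain ⟨a1, a2, a3⟩ := he2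
      rw [a1, a2, a3]
    rw [h2g, hxy.1, hxy.2]
    refine ⟨x+1, (x+1)%σ+1, ?_, ?_, ?_⟩
    · have := ne_succ_mod σ x hσ hx; omega
    · rw [show [x+1, y+1] ++ [x+1] = [x+1,y+1,x+1] from rfl, ← hw1]
      exact win3_infix W p1
    · rw [show [x+1, y+1] ++ [(x+1)%σ+1] = [x+1,y+1,(x+1)%σ+1] from rfl, ← hw2]
      exact win3_infix W p2
  have hsym : ∀ i, w.getD (i % (2*σ^2)) 0 < σ := by
    intro i
    obtain ⟨x, y, hx, hy, hcase⟩ := hwM3 (i % (2*σ^2)) (Nat.mod_lt _ (by omega))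
    rcases hcase with hc | hc <;>
    · rw [hcy] at hc
      simp only [List.cons.injEq, and_true] at hc
      obtain ⟨c1, -, -⟩ := hc
      rw [Nat.mod_mod_of_dvd i dvd_rfl] at c1
      omega
  have h1W : ∀ p, p + 1 ≤ W.length → ∃ j, 2 ≤ j ∧ j + 1 ≤ W.length ∧
      W.getD j 0 = W.getD p 0 := by
    intro p hp
    rcases Nat.lt_or_ge p 2 with h | h
    · obtain ⟨⟨p1, hp1, he1⟩, -⟩ := hwM1 _ _ (hsym p) (hsym p)
      rw [hcy] at he1
      simp only [List.cons.injEq, and_true] at he1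
      obtain ⟨-, -, c3⟩ := he1
      refine ⟨p1+2, by omega, by rw [hWlen]; omega, ?_⟩
      rw [hWget (p1+2) (by omega), hWget p (by omega), c3]
    · exact ⟨p, h, hp, rfl⟩
  have h2W : ∀ p, p + 2 ≤ W.length → ∃ j, 1 ≤ j ∧ j + 2 ≤ W.length ∧
      (W.drop j).take 2 = (W.drop p).take 2 := by
    intro p hp
    rcases Nat.eq_zero_or_pos p with rfl | h
    · obtain ⟨⟨p1, hp1, he1⟩, p2, hp2, he2⟩ := hwM1 _ _ (hsym 0) (hsym 1)
      rw [hcy] at he1 he2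
      simp only [List.cons.injEq, and_true] at he1 he2
      obtain ⟨a1, a2, a3⟩ := he1
      obtain ⟨b1, b2, b3⟩ := he2
      have hx0 : (0:ℕ) % (2*σ^2) = 0 := Nat.mod_eq_of_lt (by omega)
      have hx1 : (1:ℕ) % (2*σ^2) = 1 := Nat.mod_eq_of_lt (by omega)
      have hne : p1 ≠ p2 := by
        intro hq
        subst hq
        rw [a3] at b3
        exact ne_succ_mod σ _ hσ (hsym 0) b3
      rcases Nat.eq_zero_or_pos p1 with rfl | hpos
      · refine ⟨p2, by omega, by rw [hWlen]; omega, ?_⟩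
        rw [drop_take_two W p2 (by rw [hWlen]; omega),
          drop_take_two W 0 (by rw [hWlen]; omega),
          hWget p2 (by omega), hWget (p2+1) (by omega),
          hWget 0 (by omega), hWget 1 (by omega), b1, b2, hx0, hx1]
      · refine ⟨p1, hpos, by rw [hWlen]; omega, ?_⟩
        rw [drop_take_two W p1 (by rw [hWlen]; omega),
          drop_take_two W 0 (by rw [hWlen]; omega),
          hWget p1 (by omega), hWget (p1+1) (by omega),
          hWget 0 (by omega), hWget 1 (by omega), a1, a2, hx0, hx1]
    · exact ⟨p, h, hp, rfl⟩
  have hfin := chi_eq_abstract W (by rw [hWlen]; omega) hinjW hbrW h1W h2W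
  rw [hfin, hWlen]
  omega
end
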